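/- Let $\zeta_1,\dots,\zeta_M > 0$ and $c_m, d_m \in \mathbb{R}$ with not all $c_m = d_m$. Define $\hat{M}_1(\lambda) = \sum_m \frac{(c_m - d_m)^2\zeta_m^2}{(\lambda + \zeta_m)^2} + \sum_m \frac{d_m^2\lambda^2}{(\lambda + \zeta_m)^2}$. Then there exists $\lambda > 0$ such that $\hat{M}_1(\lambda) < \hat{M}_1(0)$. -/

import Mathlib

/-!
The bias term decreases with slope `-2 (c_m - d_m)² / ζ_m` at `λ = 0`, while the variance term
`d_m² λ² / (λ + ζ_m)²` vanishes to second order there. Hence `M̂₁'(0) < 0` as soon as some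
`c_m ≠ d_m`, and `M̂₁` drops below `M̂₁(0)` just to the right of `0`.
-/

open Finset

theorem HasDerivWithinAt.exists_gt_lt_of_neg {f : ℝ → ℝ} {f' x : ℝ}
    (hf : HasDerivWithinAt f f' (Set.Ici x) x) (hf' : f' < 0) : ∃ y > x, f y < f x := by
  obtain ⟨y, hslope, hxy⟩ :=
    ((hf.liminf_right_slope_le hf').and_eventually self_mem_nhdsWithin).exists
  exact ⟨y, hxy, (slope_neg_iff_of_le (le_of_lt hxy)).1 hslope⟩

section RidgeRisk

variable {ζ : ℝ}

theorem hasDerivAt_mul_sq_div_add_sq_zero (a : ℝ) (hζ : ζ ≠ 0) :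
    HasDerivAt (fun l : ℝ => a * ζ ^ 2 / (l + ζ) ^ 2) (-(2 * a / ζ)) 0 := by
  refine ((hasDerivAt_const (0 : ℝ) (a * ζ ^ 2)).fun_div
    (((hasDerivAt_id' (0 : ℝ)).add_const ζ).fun_pow 2) (by simpa using hζ)).congr_deriv ?_
  simp only [zero_add, zero_mul, zero_sub, mul_one]
  field_simp
  ring

theorem hasDerivAt_mul_sq_div_add_sq_self_zero (b : ℝ) (hζ : ζ ≠ 0) :
    HasDerivAt (fun l : ℝ => b * l ^ 2 / (l + ζ) ^ 2) 0 0 := by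
  refine (((hasDerivAt_pow 2 (0 : ℝ)).const_mul b).fun_div
    (((hasDerivAt_id' (0 : ℝ)).add_const ζ).fun_pow 2) (by simpa using hζ)).congr_deriv ?_
  simp

theorem hasDerivAt_ridgeRisk_zero {ι : Type*} [Fintype ι] (ζ a b : ι → ℝ) (hζ : ∀ m, ζ m ≠ 0) :
    HasDerivAt (fun l : ℝ => ∑ m, a m * ζ m ^ 2 / (l + ζ m) ^ 2 + ∑ m, b m * l ^ 2 / (l + ζ m) ^ 2)
      (-∑ m, 2 * a m / ζ m) 0 := by
  have hbias := HasDerivAt.fun_sum fun m (_ : m ∈ univ) =>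
    hasDerivAt_mul_sq_div_add_sq_zero (a m) (hζ m)
  have hvar := HasDerivAt.fun_sum fun m (_ : m ∈ univ) =>
    hasDerivAt_mul_sq_div_add_sq_self_zero (b m) (hζ m)
  simpa only [sum_neg_distrib, sum_const_zero, add_zero] using hbias.fun_add hvar

end RidgeRisk

/-- Theorem 4: there is a positive ridge parameter strictly improving on `λ = 0`. -/
theorem stmt11 {M : ℕ} (ζ c d : Fin M → ℝ) (hζ : ∀ m, 0 < ζ m) (hcd : c ≠ d)
    (M1 : ℝ → ℝ)
    (hM1 : ∀ l, M1 l = ∑ m, (c m - d m) ^ 2 * (ζ m) ^ 2 / (l + ζ m) ^ 2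
      + ∑ m, (d m) ^ 2 * l ^ 2 / (l + ζ m) ^ 2) :
    ∃ lam > (0 : ℝ), M1 lam < M1 0 := by
  obtain ⟨m₀, hm₀⟩ := Function.ne_iff.1 hcd
  have hderiv : HasDerivAt M1 (-∑ m, 2 * (c m - d m) ^ 2 / ζ m) 0 := by
    rw [funext hM1]
    exact hasDerivAt_ridgeRisk_zero ζ (fun m => (c m - d m) ^ 2) (fun m => d m ^ 2)
      fun m => (hζ m).ne'
  have hslope : 0 < ∑ m, 2 * (c m - d m) ^ 2 / ζ m := by
    refine sum_pos' (fun m _ => by have := hζ m; positivity) ⟨m₀, mem_univ _, ?_⟩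
    have := hζ m₀
    have := sub_ne_zero.2 hm₀
    positivity
  exact hderiv.hasDerivWithinAt.exists_gt_lt_of_neg (neg_neg_of_pos hslope)
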